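/- arXiv:math/9902029 — 7 statements merged into one kernel-verified Lean document; each statement's English description precedes it below -/
import Mathlib

section
/- Let n ≥ 2 and A the universal unital *-algebra generated by self-adjoint elements x_{ij} (1 ≤ i,j ≤ n) subject to the magic-unitary relations. Then the map Δ(x_{ij}) = Σ_k x_{ik} ⊗ x_{kj} extends to a well-defined algebra homomorphism Δ : A → A ⊗ A, i.e. the elements X_{ij} = Σ_k x_{ik} ⊗ x_{kj} of A ⊗ A again satisfy the magic-unitary relations. -/
/-!
In `X i j * X i k = ∑ a b, x i a * x i b ⊗ x a j * x b k`, orthogonality of the row `x i`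
kills the terms with `a ≠ b`, and orthogonality of the row `x a` then produces `δ j k`; the
column relations are the mirror image. The sum relations follow by summing the second tensor
factor first.
-/

open Finset TensorProduct

section MagicUnitary

variable {R A B ι κ μ : Type*} [CommSemiring R] [Semiring A] [Semiring B] [Algebra R A]
  [Algebra R B] [Fintype κ]

theorem sum_tmul_mul_sum_tmul_of_rows [DecidableEq κ] [DecidableEq μ]
    {x : ι → κ → A} {y : κ → μ → B}
    (hx : ∀ i j k, x i j * x i k = if j = k then x i j else 0)
    (hy : ∀ i j k, y i j * y i k = if j = k then y i j else 0) (i : ι) (j k : μ) :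
    (∑ a, x i a ⊗ₜ[R] y a j) * (∑ a, x i a ⊗ₜ[R] y a k) =
      if j = k then ∑ a, x i a ⊗ₜ[R] y a j else 0 := by
  simp only [sum_mul_sum, Algebra.TensorProduct.tmul_mul_tmul, hx, ite_tmul,
    sum_ite_eq, mem_univ, if_true, hy, tmul_ite, sum_ite_irrel, sum_const_zero]

theorem sum_tmul_mul_sum_tmul_of_columns [DecidableEq κ] [DecidableEq μ]
    {x : μ → κ → A} {y : κ → ι → B}
    (hx : ∀ i j k, x j i * x k i = if j = k then x j i else 0)
    (hy : ∀ i j k, y j i * y k i = if j = k then y j i else 0) (i : ι) (j k : μ) :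
    (∑ a, x j a ⊗ₜ[R] y a i) * (∑ a, x k a ⊗ₜ[R] y a i) =
      if j = k then ∑ a, x j a ⊗ₜ[R] y a i else 0 := by
  simp only [sum_mul_sum, Algebra.TensorProduct.tmul_mul_tmul, hx, hy, tmul_ite,
    sum_ite_eq, mem_univ, if_true, ite_tmul, sum_ite_irrel, sum_const_zero]

theorem sum_sum_tmul_eq_one_of_row_sums [Fintype μ] {x : ι → κ → A} {y : κ → μ → B}
    (hx : ∀ i, ∑ l, x i l = 1) (hy : ∀ i, ∑ l, y i l = 1) (i : ι) :
    ∑ l, ∑ a, x i a ⊗ₜ[R] y a l = 1 := by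
  rw [sum_comm]
  simp only [← tmul_sum, hy, ← sum_tmul, hx, Algebra.TensorProduct.one_def]

theorem sum_sum_tmul_eq_one_of_column_sums [Fintype μ] {x : μ → κ → A} {y : κ → ι → B}
    (hx : ∀ i, ∑ l, x l i = 1) (hy : ∀ i, ∑ l, y l i = 1) (i : ι) :
    ∑ l, ∑ a, x l a ⊗ₜ[R] y a i = 1 := by
  rw [sum_comm]
  simp only [← sum_tmul, hx, ← tmul_sum, hy, Algebra.TensorProduct.one_def]

end MagicUnitary

theorem stmt4_general {A : Type*} [Ring A] [StarRing A] [Algebra ℂ A] [StarModule ℂ A]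
    [StarRing (A ⊗[ℂ] A)]
    (hst : ∀ a b : A, star (a ⊗ₜ[ℂ] b) = star a ⊗ₜ[ℂ] star b)
    {n : ℕ} (x : Fin n → Fin n → A)
    (hstar : ∀ i j, star (x i j) = x i j)
    (hrow : ∀ i j k, x i j * x i k = if j = k then x i j else 0)
    (hcol : ∀ i j k, x j i * x k i = if j = k then x j i else 0)
    (hrowsum : ∀ i, ∑ l, x i l = 1)
    (hcolsum : ∀ i, ∑ l, x l i = 1) :
    let X : Fin n → Fin n → A ⊗[ℂ] A := fun i j => ∑ k, x i k ⊗ₜ[ℂ] x k j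
    (∀ i j, star (X i j) = X i j) ∧
    (∀ i j k, X i j * X i k = if j = k then X i j else 0) ∧
    (∀ i j k, X j i * X k i = if j = k then X j i else 0) ∧
    (∀ i, ∑ l, X i l = 1) ∧ (∀ i, ∑ l, X l i = 1) :=
  ⟨fun i j => by simp only [star_sum, hst, hstar],
    sum_tmul_mul_sum_tmul_of_rows hrow hrow,
    sum_tmul_mul_sum_tmul_of_columns hcol hcol,
    sum_sum_tmul_eq_one_of_row_sums hrowsum hrowsum,
    sum_sum_tmul_eq_one_of_column_sums hcolsum hcolsum⟩

/-- The comultiplication of the quantum permutation algebra is well defined: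
if `(x i j)` is a magic unitary in a `*`-algebra `A`, then the elements
`X i j = ∑ k, x i k ⊗ x k j` of `A ⊗ A` (with the entrywise star) again
satisfy the magic unitary relations. -/
theorem stmt4 {A : Type*} [Ring A] [StarRing A] [Algebra ℂ A] [StarModule ℂ A]
    [StarRing (A ⊗[ℂ] A)]
    (hst : ∀ a b : A, star (a ⊗ₜ[ℂ] b) = star a ⊗ₜ[ℂ] star b)
    {n : ℕ} (hn : 2 ≤ n) (x : Fin n → Fin n → A)
    (hstar : ∀ i j, star (x i j) = x i j)
    (hrow : ∀ i j k, x i j * x i k = if j = k then x i j else 0)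
    (hcol : ∀ i j k, x j i * x k i = if j = k then x j i else 0)
    (hrowsum : ∀ i, ∑ l, x i l = 1)
    (hcolsum : ∀ i, ∑ l, x l i = 1) :
    let X : Fin n → Fin n → A ⊗[ℂ] A := fun i j => ∑ k, x i k ⊗ₜ[ℂ] x k j
    (∀ i j, star (X i j) = X i j) ∧
    (∀ i j k, X i j * X i k = if j = k then X i j else 0) ∧
    (∀ i j k, X j i * X k i = if j = k then X j i else 0) ∧
    (∀ i, ∑ l, X i l = 1) ∧ (∀ i, ∑ l, X l i = 1) :=
  stmt4_general hst x hstar hrow hcol hrowsum hcolsum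
end

section
/- For a finite graph G = (V,E) with vertex set {1,...,n} and edge set {γ_1,...,γ_m}, suppose (X_{ij}) is a magic unitary in a unital *-algebra satisfying additionally X_{s(γ_j)i} X_{t(γ_j)k} = 0 whenever (i,k) ∉ E. Then for all edges γ_j, γ_l, γ_{l'}: X_{s(γ_l)s(γ_j)}X_{t(γ_l)t(γ_j)} · X_{s(γ_l)s(γ_{l'})}X_{t(γ_l)t(γ_{l'})} = δ_{j,l'} X_{s(γ_l)s(γ_j)}X_{t(γ_l)t(γ_j)}, provided the commutation relations X_{s(γ_j)s(γ_l)}X_{t(γ_j)t(γ_l)} = X_{t(γ_j)t(γ_l)}X_{s(γ_j)s(γ_l)} hold. -/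
/-! Commuting `P = X (s γₗ) (s γⱼ)` past `Q = X (t γₗ) (t γⱼ)` puts each factor next to the entry of
the same row of the second coefficient, so orthogonality within the rows `s γₗ` and `t γₗ` makes
the product vanish unless `γⱼ` and `γₗ'` have the same source and the same target, i.e. `j = l'`. -/

theorem Commute.mul_mul_mul_eq_ite {M : Type*} [SemigroupWithZero M] {p q r s : M}
    {a b : Prop} [Decidable a] [Decidable b] (hpq : Commute p q)
    (hpr : p * r = if a then p else 0) (hqs : q * s = if b then q else 0) :
    p * q * (r * s) = if a ∧ b then p * q else 0 := by
  have hswap : p * q * (r * s) = q * (p * r) * s := by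
    rw [hpq.eq, mul_assoc, ← mul_assoc p, ← mul_assoc, mul_assoc]
  by_cases ha : a
  · rw [hswap, hpr, if_pos ha, ← hpq.eq, mul_assoc, hqs]
    by_cases hb : b <;> simp [ha, hb]
  · rw [hswap, hpr, if_neg ha, mul_zero, zero_mul, if_neg (fun h => ha h.1)]

theorem stmt7_general {A : Type*} [Ring A]
    {n m : ℕ} (E : Fin m → Fin n × Fin n) (hE : Function.Injective E)
    (X : Fin n → Fin n → A)
    (hrow : ∀ i j k, X i j * X i k = if j = k then X i j else 0)
    (hcomm : ∀ j l : Fin m,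
      X (E j).1 (E l).1 * X (E j).2 (E l).2 =
        X (E j).2 (E l).2 * X (E j).1 (E l).1) :
    ∀ j l l' : Fin m,
      (X (E l).1 (E j).1 * X (E l).2 (E j).2) *
        (X (E l).1 (E l').1 * X (E l).2 (E l').2) =
      if j = l' then X (E l).1 (E j).1 * X (E l).2 (E j).2 else 0 := by
  intro j l l'
  rw [Commute.mul_mul_mul_eq_ite (hcomm l j) (hrow _ _ _) (hrow _ _ _)]
  simp only [← Prod.ext_iff, hE.eq_iff]

/-- For a graph with vertex set `Fin n` and (distinct) edges `γ₁,…,γₘ` given by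
`E : Fin m → Fin n × Fin n`, if `(X i j)` is a magic unitary satisfying the
graph relation `X (s γⱼ) i * X (t γⱼ) k = 0` whenever `(i,k)` is not an edge,
together with the commutation relations (3.3), then the edge coaction
coefficients `b l j = X (s γₗ) (s γⱼ) * X (t γₗ) (t γⱼ)` satisfy
`b l j * b l l' = δ_{j l'} • b l j`. -/
theorem stmt7 {A : Type*} [Ring A] [StarRing A] [Algebra ℂ A]
    {n m : ℕ} (E : Fin m → Fin n × Fin n) (hE : Function.Injective E)
    (X : Fin n → Fin n → A)
    (hstar : ∀ i j, star (X i j) = X i j)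
    (hrow : ∀ i j k, X i j * X i k = if j = k then X i j else 0)
    (hcol : ∀ i j k, X j i * X k i = if j = k then X j i else 0)
    (hrowsum : ∀ i, ∑ l, X i l = 1)
    (hcolsum : ∀ i, ∑ l, X l i = 1)
    (hvan : ∀ (j : Fin m) (i k : Fin n), (∀ l, E l ≠ (i, k)) →
      X (E j).1 i * X (E j).2 k = 0)
    (hcomm : ∀ j l : Fin m,
      X (E j).1 (E l).1 * X (E j).2 (E l).2 =
        X (E j).2 (E l).2 * X (E j).1 (E l).1) :
    ∀ j l l' : Fin m,
      (X (E l).1 (E j).1 * X (E l).2 (E j).2) *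
        (X (E l).1 (E l').1 * X (E l).2 (E l').2) =
      if j = l' then X (E l).1 (E j).1 * X (E l).2 (E j).2 else 0 :=
  stmt7_general E hE X hrow hcomm
end

section
/- Let B be the universal unital *-algebra generated by eight self-adjoint idempotents y_1,...,y_8 with the relations: y_1y_i = y_iy_1 = 0 for 2 ≤ i ≤ 6; y_2y_i = y_iy_2 = 0 for 3 ≤ i ≤ 6; y_3y_i = y_iy_3 = 0 for i ∈ {4,7,8}; y_4y_i = y_iy_4 = 0 for i ∈ {7,8}; y_5y_i = y_iy_5 = 0 for i ∈ {6,7,8}; y_6y_i = y_iy_6 = 0 for i ∈ {7,8}; y_7y_8 = y_8y_7 = 0; and y_1+y_2+y_3+y_4 = y_1+y_2+y_5+y_6 = y_3+y_4+y_7+y_8 = y_5+y_6+y_7+y_8 = 1. Then B is noncommutative. -/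
/-!
Send `y₁, y₂` to a projection `p` and its complement `1 - p`, `y₇, y₈` to a projection `q` and
its complement, and `y₃, …, y₆` to `0`: every relation then reduces to `p (1 - p) = 0` or
`q (1 - q) = 0`. Taking for `p` and `q` two noncommuting rank-one projections of `M₂(ℂ)` gives
a representation in which `y₁` and `y₇` do not commute.
-/

/-- The orthogonality pairs of the quantum dihedral group relations
(relations of Proposition 3.3), with indices `0,…,7` for `y₁,…,y₈`. -/
def d4Pairs : Finset (Fin 8 × Fin 8) :=
  {(0,1), (0,2), (0,3), (0,4), (0,5),
   (1,2), (1,3), (1,4), (1,5),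
   (2,3), (2,6), (2,7),
   (3,6), (3,7),
   (4,5), (4,6), (4,7),
   (5,6), (5,7),
   (6,7)}

/-- The relations defining the quantum dihedral group algebra `B`. -/
def D4Rels {A : Type*} [Ring A] [StarRing A] (y : Fin 8 → A) : Prop :=
  (∀ i, star (y i) = y i) ∧ (∀ i, y i * y i = y i) ∧
  (∀ p ∈ d4Pairs, y p.1 * y p.2 = 0 ∧ y p.2 * y p.1 = 0) ∧
  y 0 + y 1 + y 2 + y 3 = 1 ∧ y 0 + y 1 + y 4 + y 5 = 1 ∧
  y 2 + y 3 + y 6 + y 7 = 1 ∧ y 4 + y 5 + y 6 + y 7 = 1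

lemma d4Rels_of_isStarProjection {A : Type*} [Ring A] [StarRing A] {p q : A}
    (hp : IsStarProjection p) (hq : IsStarProjection q) :
    D4Rels ![p, 1 - p, 0, 0, 0, 0, q, 1 - q] := by
  have hp' := hp.one_sub
  have hq' := hq.one_sub
  refine ⟨fun i => ?_, fun i => ?_, fun x hx => ?_, ?_, ?_, ?_, ?_⟩
  · fin_cases i <;> simp [hp.isSelfAdjoint.star_eq, hp'.isSelfAdjoint.star_eq,
      hq.isSelfAdjoint.star_eq, hq'.isSelfAdjoint.star_eq]
  · fin_cases i <;> simp [hp.isIdempotentElem.eq, hp'.isIdempotentElem.eq,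
      hq.isIdempotentElem.eq, hq'.isIdempotentElem.eq]
  · fin_cases hx <;> simp [hp.mul_one_sub_self, hp.one_sub_mul_self,
      hq.mul_one_sub_self, hq.one_sub_mul_self]
  all_goals simp

lemma isStarProjection_diag_one_zero {K : Type*} [Semiring K] [StarRing K] :
    IsStarProjection !![(1 : K), 0; 0, 0] := by
  refine ⟨?_, ?_⟩ <;> ext i j <;> fin_cases i <;> fin_cases j <;> simp

lemma isStarProjection_half_ones {K : Type*} [Field K] [StarRing K] [NeZero (2 : K)] :
    IsStarProjection !![(1 / 2 : K), 1 / 2; 1 / 2, 1 / 2] := by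
  refine ⟨?_, ?_⟩ <;> ext i j <;> fin_cases i <;> fin_cases j <;> simp
  all_goals field_simp; norm_num

lemma not_commute_diag_one_zero_half_ones {K : Type*} [Field K] [NeZero (2 : K)] :
    ¬ Commute !![(1 : K), 0; 0, 0] !![(1 / 2 : K), 1 / 2; 1 / 2, 1 / 2] := by
  intro h
  simpa [two_ne_zero] using congr_fun₂ h.eq 0 1

/-- The universal `*`-algebra `B` on `y₁,…,y₈` subject to the relations of
Proposition 3.3 is noncommutative: the relations do not imply that the
generators commute. -/
theorem stmt8 :
    ¬ (∀ (A : Type) (_ : Ring A) (_ : StarRing A) (_ : Algebra ℂ A)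
        (y : Fin 8 → A), D4Rels y → ∀ i j, Commute (y i) (y j)) := fun h =>
  (not_commute_diag_one_zero_half_ones (K := ℂ)) <|
    h _ _ _ inferInstance _ (d4Rels_of_isStarProjection isStarProjection_diag_one_zero
      isStarProjection_half_ones) 0 6
end

section
/- Let B be the universal *-algebra of Proposition 3.3 (quantum dihedral group algebra). Then B is infinite-dimensional. -/
/-- The defining relations of the quantum dihedral group algebra, as a relation
on the free algebra on eight (self-adjoint) generators. -/
inductive D4Rel : FreeAlgebra ℂ (Fin 8) → FreeAlgebra ℂ (Fin 8) → Prop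
  | idem (i : Fin 8) :
      D4Rel (FreeAlgebra.ι ℂ i * FreeAlgebra.ι ℂ i) (FreeAlgebra.ι ℂ i)
  | orth (p : Fin 8 × Fin 8) (h : p ∈ d4Pairs) :
      D4Rel (FreeAlgebra.ι ℂ p.1 * FreeAlgebra.ι ℂ p.2) 0
  | orth' (p : Fin 8 × Fin 8) (h : p ∈ d4Pairs) :
      D4Rel (FreeAlgebra.ι ℂ p.2 * FreeAlgebra.ι ℂ p.1) 0
  | sum1 : D4Rel (FreeAlgebra.ι ℂ 0 + FreeAlgebra.ι ℂ 1 +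
      FreeAlgebra.ι ℂ 2 + FreeAlgebra.ι ℂ 3) 1
  | sum2 : D4Rel (FreeAlgebra.ι ℂ 0 + FreeAlgebra.ι ℂ 1 +
      FreeAlgebra.ι ℂ 4 + FreeAlgebra.ι ℂ 5) 1
  | sum3 : D4Rel (FreeAlgebra.ι ℂ 2 + FreeAlgebra.ι ℂ 3 +
      FreeAlgebra.ι ℂ 6 + FreeAlgebra.ι ℂ 7) 1
  | sum4 : D4Rel (FreeAlgebra.ι ℂ 4 + FreeAlgebra.ι ℂ 5 +
      FreeAlgebra.ι ℂ 6 + FreeAlgebra.ι ℂ 7) 1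

/-! Sending `y₁, y₂, y₇, y₈` to `e, 1 - e, p, 1 - p` and all other generators to `0` respects the
relations of `B` for any two idempotents `e`, `p`. In `M₂(ℂ[X])` take `e = E₁₁` and the rank-one
idempotent `p = (X, 1)ᵀ (1, 1 - X)`: then `e p e = X E₁₁`, so the `(1,1)`-entries of the images of
the polynomials in `y₁ y₇ y₁` exhaust `ℂ[X]`, and `B` maps linearly onto the infinite-dimensional
space `ℂ[X]`. -/

open Polynomial Matrix

section TwoIdempotents

variable {A : Type*} [Ring A] [Algebra ℂ A] {e p : A}

def d4Gens (e p : A) : Fin 8 → A := ![e, 1 - e, 0, 0, 0, 0, p, 1 - p]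

theorem lift_d4Gens_eq_of_d4Rel (he : IsIdempotentElem e) (hp : IsIdempotentElem p)
    ⦃a b : FreeAlgebra ℂ (Fin 8)⦄ (h : D4Rel a b) :
    FreeAlgebra.lift ℂ (d4Gens e p) a = FreeAlgebra.lift ℂ (d4Gens e p) b := by
  induction h with
  | idem i => fin_cases i <;> simp [d4Gens, he.eq, hp.eq, he.one_sub.eq, hp.one_sub.eq]
  | orth _ h | orth' _ h =>
    fin_cases h <;> simp [d4Gens, he.mul_one_sub_self, he.one_sub_mul_self,
      hp.mul_one_sub_self, hp.one_sub_mul_self]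
  | sum1 | sum2 | sum3 | sum4 => simp [d4Gens]

def d4Lift (he : IsIdempotentElem e) (hp : IsIdempotentElem p) : RingQuot D4Rel →ₐ[ℂ] A :=
  RingQuot.liftAlgHom ℂ ⟨FreeAlgebra.lift ℂ (d4Gens e p), lift_d4Gens_eq_of_d4Rel he hp⟩

theorem d4Lift_mkAlgHom_ι (he : IsIdempotentElem e) (hp : IsIdempotentElem p) (i : Fin 8) :
    d4Lift he hp (RingQuot.mkAlgHom ℂ D4Rel (FreeAlgebra.ι ℂ i)) = d4Gens e p i := by
  rw [d4Lift, RingQuot.liftAlgHom_mkAlgHom_apply, FreeAlgebra.lift_ι_apply]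

end TwoIdempotents

section Matrices

variable {n R : Type*} [Fintype n] [CommSemiring R]

theorem Matrix.isIdempotentElem_vecMulVec {v w : n → R} (h : w ⬝ᵥ v = 1) :
    IsIdempotentElem (vecMulVec v w) := by
  rw [IsIdempotentElem, vecMulVec_mul_vecMulVec, h, one_smul]

theorem Matrix.isIdempotentElem_single_one [DecidableEq n] (i : n) :
    IsIdempotentElem (single i i (1 : R)) := by
  rw [IsIdempotentElem, single_mul_single_same, one_mul]

theorem Matrix.aeval_diagonal {S : Type*} [CommSemiring S] [Algebra S R] [DecidableEq n]
    (d : n → R) (q : S[X]) : aeval (diagonal d) q = diagonal fun i => aeval (d i) q := by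
  rw [← diagonalAlgHom_apply S, aeval_algHom_apply, diagonalAlgHom_apply, aeval_pi_apply]

end Matrices

noncomputable def d4Rep : RingQuot D4Rel →ₐ[ℂ] Matrix (Fin 2) (Fin 2) ℂ[X] :=
  d4Lift (isIdempotentElem_single_one 0)
    (isIdempotentElem_vecMulVec (v := ![X, 1]) (w := ![1, 1 - X])
      (by simp [dotProduct, Fin.sum_univ_two]))

def y₁y₇y₁ : RingQuot D4Rel :=
  RingQuot.mkAlgHom ℂ D4Rel (FreeAlgebra.ι ℂ 0 * FreeAlgebra.ι ℂ 6 * FreeAlgebra.ι ℂ 0)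

theorem d4Rep_y₁y₇y₁ : d4Rep y₁y₇y₁ = single 0 0 X := by
  simp only [y₁y₇y₁, d4Rep, map_mul, d4Lift_mkAlgHom_ι]
  simp [d4Gens]

theorem surjective_entry_comp_d4Rep :
    Function.Surjective (entryLinearMap ℂ ℂ[X] (0 : Fin 2) (0 : Fin 2) ∘ₗ d4Rep.toLinearMap) := by
  refine fun q => ⟨aeval y₁y₇y₁ q, ?_⟩
  rw [LinearMap.comp_apply, AlgHom.toLinearMap_apply, ← aeval_algHom_apply, d4Rep_y₁y₇y₁,
    ← diagonal_single, aeval_diagonal]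
  simp

/-- The quantum dihedral group algebra `B` of Proposition 3.3 is
infinite-dimensional over `ℂ`. -/
theorem stmt11 : ¬ FiniteDimensional ℂ (RingQuot D4Rel) := fun _ =>
  Polynomial.not_finite (Module.Finite.of_surjective _ surjective_entry_comp_d4Rep)
end

section
/- Let G be the complete graph on n vertices (E = V × V, or all pairs of distinct vertices). Then in A_aut^o(G), the relations (3.3) force all generators X_{ij} to pairwise commute, i.e. the algebra A_aut^o(G) is commutative. -/
theorem stmt13_general {A : Type*} [Ring A] {n : ℕ}
    (X : Fin n → Fin n → A)
    (hrow : ∀ i j k, X i j * X i k = if j = k then X i j else 0)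
    (h33 : ∀ a b c d : Fin n, a ≠ b → c ≠ d →
      X a c * X b d = X b d * X a c)
    (h32 : ∀ a b i : Fin n, a ≠ b → X a i * X b i = 0) :
    ∀ i j k l, Commute (X i j) (X k l) := by
  intro i j k l
  rcases eq_or_ne i k with rfl | hik <;> rcases eq_or_ne j l with rfl | hjl
  · exact Commute.refl _
  · change X i j * X i l = X i l * X i j
    rw [hrow, hrow, if_neg hjl, if_neg hjl.symm]
  · change X i j * X k j = X k j * X i j
    rw [h32 i k j hik, h32 k i j hik.symm]
  · exact h33 i k j l hik hjl

/-- For the complete graph on `n` vertices (all pairs of distinct vertices are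
edges), the graph relations (3.3) force all entries of the magic unitary to
pairwise commute: `A_aut^o(G)` is commutative. -/
theorem stmt13 {A : Type*} [Ring A] [StarRing A] [Algebra ℂ A] {n : ℕ}
    (X : Fin n → Fin n → A)
    (hstar : ∀ i j, star (X i j) = X i j)
    (hrow : ∀ i j k, X i j * X i k = if j = k then X i j else 0)
    (hcol : ∀ i j k, X j i * X k i = if j = k then X j i else 0)
    (hrowsum : ∀ i, ∑ l, X i l = 1)
    (hcolsum : ∀ i, ∑ l, X l i = 1)
    (h33 : ∀ a b c d : Fin n, a ≠ b → c ≠ d →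
      X a c * X b d = X b d * X a c)
    (h32 : ∀ a b i : Fin n, a ≠ b → X a i * X b i = 0) :
    ∀ i j k l, Commute (X i j) (X k l) :=
  stmt13_general X hrow h33 h32
end

section
/- In the algebra A_aut^o(G) for the D4-graph (vertices {1,2,3,4}, edges (1,2),(2,1),(3,4),(4,3)): the eight elements X_{11}, X_{12}, X_{13}, X_{14}, X_{31}, X_{32}, X_{33}, X_{34} generate the algebra, i.e. every generator X_{ij} equals one of these eight (X_{22}=X_{11}, X_{21}=X_{12}, X_{24}=X_{13}, X_{23}=X_{14}, X_{42}=X_{31}, X_{41}=X_{32}, X_{44}=X_{33}, X_{43}=X_{34}). -/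
/-!
If `(a, b)` and `(j, m)` are edges of a graph in which every vertex has at most one out-neighbour
and at most one in-neighbour, then the vanishing relations leave a single nonzero term in
`X a j * ∑ l, X b l` and in `(∑ l, X a l) * X b m`, so both `X a j` and `X b m` equal `X a j * X b m`.
-/

/-- The edge set of the D₄-graph: vertices `{0,1,2,3}` and edges
`(0,1), (1,0), (2,3), (3,2)` (i.e. `(1,2),(2,1),(3,4),(4,3)` in the paper). -/
def D4Edges : Finset (Fin 4 × Fin 4) := {(0,1), (1,0), (2,3), (3,2)}

section SumEqOne

variable {ι R : Type*} [Fintype ι] [NonAssocSemiring R] {f : ι → R} {x : R}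

lemma mul_apply_eq_self_of_sum_eq_one (hf : ∑ l, f l = 1) {m : ι}
    (h : ∀ l, l ≠ m → x * f l = 0) : x * f m = x := by
  calc x * f m = ∑ l, x * f l := (Fintype.sum_eq_single m h).symm
    _ = x := by rw [← Finset.mul_sum, hf, mul_one]

lemma apply_mul_eq_self_of_sum_eq_one (hf : ∑ l, f l = 1) {m : ι}
    (h : ∀ l, l ≠ m → f l * x = 0) : f m * x = x := by
  calc f m * x = ∑ l, f l * x := (Fintype.sum_eq_single m h).symm
    _ = x := by rw [← Finset.sum_mul, hf, one_mul]

end SumEqOne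

lemma entry_eq_of_mem_of_mem {V R : Type*} [Fintype V] [NonAssocSemiring R]
    {E : Finset (V × V)} (X : V → V → R) (hrowsum : ∀ i, ∑ l, X i l = 1)
    (hvanish : ∀ a b i k, (a, b) ∈ E → (i, k) ∉ E → X a i * X b k = 0)
    (hout : ∀ j l m, (j, l) ∈ E → (j, m) ∈ E → l = m)
    (hin : ∀ j l m, (l, m) ∈ E → (j, m) ∈ E → l = j)
    {a b j m : V} (hab : (a, b) ∈ E) (hjm : (j, m) ∈ E) : X a j = X b m := by
  have hleft : X a j * X b m = X a j :=
    mul_apply_eq_self_of_sum_eq_one (hrowsum b) fun l hl =>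
      hvanish a b j l hab fun hjl => hl (hout j l m hjl hjm)
  have hright : X a j * X b m = X b m :=
    apply_mul_eq_self_of_sum_eq_one (f := X a) (hrowsum a) fun l hl =>
      hvanish a b l m hab fun hlm => hl (hin j l m hlm hjm)
  rw [← hleft, hright]

theorem stmt17_general {A : Type*} [Ring A]
    (X : Fin 4 → Fin 4 → A)
    (hrowsum : ∀ i, ∑ l, X i l = 1)
    (h32 : ∀ e ∈ D4Edges, ∀ i k : Fin 4, (i, k) ∉ D4Edges →
      X e.1 i * X e.2 k = 0 ∧ X e.2 k * X e.1 i = 0 ∧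
      X i e.1 * X k e.2 = 0 ∧ X k e.2 * X i e.1 = 0) :
    X 1 1 = X 0 0 ∧ X 1 0 = X 0 1 ∧ X 1 3 = X 0 2 ∧ X 1 2 = X 0 3 ∧
    X 3 1 = X 2 0 ∧ X 3 0 = X 2 1 ∧ X 3 3 = X 2 2 ∧ X 3 2 = X 2 3 := by
  have key : ∀ a b j m : Fin 4, (a, b) ∈ D4Edges → (j, m) ∈ D4Edges → X a j = X b m :=
    fun _ _ _ _ => entry_eq_of_mem_of_mem X hrowsum
      (fun a b i k hab hik => (h32 (a, b) hab i k hik).1) (by decide) (by decide)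
  exact ⟨key 1 0 1 0 (by decide) (by decide), key 1 0 0 1 (by decide) (by decide),
    key 1 0 3 2 (by decide) (by decide), key 1 0 2 3 (by decide) (by decide),
    key 3 2 1 0 (by decide) (by decide), key 3 2 0 1 (by decide) (by decide),
    key 3 2 3 2 (by decide) (by decide), key 3 2 2 3 (by decide) (by decide)⟩

/-- In `A_aut^o(G)` for the D₄-graph, the relations (3.1), (3.2)', (3.3)',
(3.4)' imply that the eight elements `X₁₁, X₁₂, X₁₃, X₁₄, X₃₁, X₃₂, X₃₃, X₃₄` exhaust all the generators. -/
theorem stmt17 {A : Type*} [Ring A] [StarRing A] [Algebra ℂ A]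
    (X : Fin 4 → Fin 4 → A)
    (hstar : ∀ i j, star (X i j) = X i j)
    (hrow : ∀ i j k, X i j * X i k = if j = k then X i j else 0)
    (hcol : ∀ i j k, X j i * X k i = if j = k then X j i else 0)
    (hrowsum : ∀ i, ∑ l, X i l = 1)
    (hcolsum : ∀ i, ∑ l, X l i = 1)
    (h32 : ∀ e ∈ D4Edges, ∀ i k : Fin 4, (i, k) ∉ D4Edges →
      X e.1 i * X e.2 k = 0 ∧ X e.2 k * X e.1 i = 0 ∧
      X i e.1 * X k e.2 = 0 ∧ X k e.2 * X i e.1 = 0)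
    (h33 : ∀ e ∈ D4Edges, ∀ f ∈ D4Edges,
      X e.1 f.1 * X e.2 f.2 = X e.2 f.2 * X e.1 f.1)
    (h34 : ∀ e ∈ D4Edges,
      (∑ f ∈ D4Edges, X f.1 e.1 * X f.2 e.2) = 1 ∧
      (∑ f ∈ D4Edges, X e.1 f.1 * X e.2 f.2) = 1) :
    X 1 1 = X 0 0 ∧ X 1 0 = X 0 1 ∧ X 1 3 = X 0 2 ∧ X 1 2 = X 0 3 ∧
    X 3 1 = X 2 0 ∧ X 3 0 = X 2 1 ∧ X 3 3 = X 2 2 ∧ X 3 2 = X 2 3 :=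
  stmt17_general X hrowsum h32
end

section
/- Let (x_{ij})_{1≤i,j≤3} be a magic unitary in a unital *-algebra A. Then all entries x_{ij} pairwise commute (for n = 3, and also n ≤ 3, all magic unitaries have commuting entries). -/
/-!
For `i ≠ k`, `j ≠ l` let `m`, `n` be the remaining row and column indices. Expanding `x k l`
through its row and then `x k n` through its column, and using the orthogonality of entries
sharing a row or a column, gives `x i j * x k l = x i j * x m n`, and symmetrically
`x k l * x i j = x m n * x i j`. Chaining these identities through `x m n` shows that
`x i j` and `x k l` commute.
-/

open Finset MulOpposite

theorem Fin.sum_univ_three_of_ne {M : Type*} [AddCommMonoid M] (f : Fin 3 → M)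
    {a b c : Fin 3} (hab : a ≠ b) (hac : a ≠ c) (hbc : b ≠ c) :
    ∑ t, f t = f a + f b + f c := by
  have huniv : ({a, b, c} : Finset (Fin 3)) = univ :=
    eq_univ_of_card _ (card_eq_three.2 ⟨a, b, c, hab, hac, hbc, rfl⟩)
  rw [← huniv, sum_insert (by simp [hab, hac]), sum_pair hbc, add_assoc]

theorem Fin.exists_ne_and_ne (a b : Fin 3) : ∃ c, a ≠ c ∧ b ≠ c := by
  revert a b
  decide

/-- A magic unitary without the self-adjointness condition: each row and each column is a
family of pairwise orthogonal idempotents summing to `1`. -/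
structure IsMagicMatrix {ι A : Type*} [Fintype ι] [DecidableEq ι] [Ring A] (x : ι → ι → A) :
    Prop where
  row_mul : ∀ i j k, x i j * x i k = if j = k then x i j else 0
  col_mul : ∀ i j k, x j i * x k i = if j = k then x j i else 0
  row_sum : ∀ i, ∑ l, x i l = 1
  col_sum : ∀ i, ∑ l, x l i = 1

namespace IsMagicMatrix

section General

variable {ι A : Type*} [Fintype ι] [DecidableEq ι] [Ring A] {x : ι → ι → A}

theorem transpose (hx : IsMagicMatrix x) : IsMagicMatrix fun i j => x j i :=
  ⟨hx.col_mul, hx.row_mul, hx.col_sum, hx.row_sum⟩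

theorem op (hx : IsMagicMatrix x) : IsMagicMatrix fun i j => MulOpposite.op (x i j) := by
  refine ⟨fun i j k => ?_, fun i j k => ?_, fun i => ?_, fun i => ?_⟩
  · rw [← op_mul, hx.row_mul]
    split_ifs <;> simp_all
  · rw [← op_mul, hx.col_mul]
    split_ifs <;> simp_all
  · rw [← op_sum, hx.row_sum, op_one]
  · rw [← op_sum, hx.col_sum, op_one]

theorem commute_of_row_eq (hx : IsMagicMatrix x) (i j l : ι) : Commute (x i j) (x i l) := by
  obtain rfl | hjl := eq_or_ne j l
  · exact Commute.refl _
  · change x i j * x i l = x i l * x i j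
    rw [hx.row_mul, hx.row_mul, if_neg hjl, if_neg hjl.symm]

theorem commute_of_col_eq (hx : IsMagicMatrix x) (i k j : ι) : Commute (x i j) (x k j) :=
  hx.transpose.commute_of_row_eq j i k

end General

section Three

variable {A : Type*} [Ring A] {x : Fin 3 → Fin 3 → A}

theorem mul_eq_sub_mul (hx : IsMagicMatrix x) {i k j l n : Fin 3} (hik : i ≠ k)
    (hjl : j ≠ l) (hjn : j ≠ n) (hln : l ≠ n) :
    x i j * x k l = x i j - x i j * x k n := by
  have hrow : x k j + x k l + x k n = 1 := by
    rw [← hx.row_sum k, Fin.sum_univ_three_of_ne _ hjl hjn hln]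
  have horth : x i j * x k j = 0 := by rw [hx.col_mul, if_neg hik]
  calc x i j * x k l = x i j * (x k j + x k l + x k n) - x i j * x k j - x i j * x k n := by
        noncomm_ring
    _ = x i j - x i j * x k n := by rw [hrow, horth, mul_one, sub_zero]

theorem mul_eq_mul_of_ne (hx : IsMagicMatrix x) {i k m j l n : Fin 3}
    (hik : i ≠ k) (him : i ≠ m) (hkm : k ≠ m) (hjl : j ≠ l) (hjn : j ≠ n) (hln : l ≠ n) :
    x i j * x k l = x i j * x m n := by
  rw [hx.mul_eq_sub_mul hik hjl hjn hln,
    hx.transpose.mul_eq_sub_mul (j := i) (l := k) (n := m) hjn hik him hkm, sub_sub_cancel]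

theorem mul_eq_mul_of_ne' (hx : IsMagicMatrix x) {i k m j l n : Fin 3}
    (hik : i ≠ k) (him : i ≠ m) (hkm : k ≠ m) (hjl : j ≠ l) (hjn : j ≠ n) (hln : l ≠ n) :
    x k l * x i j = x m n * x i j :=
  op_injective (hx.op.mul_eq_mul_of_ne hik him hkm hjl hjn hln)

theorem commute_of_ne (hx : IsMagicMatrix x) {i j k l : Fin 3} (hik : i ≠ k) (hjl : j ≠ l) :
    Commute (x i j) (x k l) := by
  obtain ⟨m, him, hkm⟩ := Fin.exists_ne_and_ne i k
  obtain ⟨n, hjn, hln⟩ := Fin.exists_ne_and_ne j l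
  calc x i j * x k l = x i j * x m n := hx.mul_eq_mul_of_ne hik him hkm hjl hjn hln
    _ = x k l * x m n := hx.mul_eq_mul_of_ne' him.symm hkm.symm hik hjn.symm hln.symm hjl
    _ = x k l * x i j := (hx.mul_eq_mul_of_ne hik.symm hkm him hjl.symm hln hjn).symm

end Three

end IsMagicMatrix

theorem stmt18_general {A : Type*} [Ring A]
    (x : Fin 3 → Fin 3 → A)
    (hrow : ∀ i j k, x i j * x i k = if j = k then x i j else 0)
    (hcol : ∀ i j k, x j i * x k i = if j = k then x j i else 0)
    (hrowsum : ∀ i, ∑ l, x i l = 1)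
    (hcolsum : ∀ i, ∑ l, x l i = 1) :
    ∀ i j k l, Commute (x i j) (x k l) := by
  have hx : IsMagicMatrix x := ⟨hrow, hcol, hrowsum, hcolsum⟩
  intro i j k l
  obtain rfl | hik := eq_or_ne i k
  · exact hx.commute_of_row_eq i j l
  obtain rfl | hjl := eq_or_ne j l
  · exact hx.commute_of_col_eq i k j
  exact hx.commute_of_ne hik hjl

/-- Any 3×3 magic unitary has pairwise commuting entries (so the quantum
permutation group `A_aut(X_n)` is commutative for `n ≤ 3`). -/
theorem stmt18 {A : Type*} [Ring A] [StarRing A]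
    (x : Fin 3 → Fin 3 → A)
    (hstar : ∀ i j, star (x i j) = x i j)
    (hrow : ∀ i j k, x i j * x i k = if j = k then x i j else 0)
    (hcol : ∀ i j k, x j i * x k i = if j = k then x j i else 0)
    (hrowsum : ∀ i, ∑ l, x i l = 1)
    (hcolsum : ∀ i, ∑ l, x l i = 1) :
    ∀ i j k l, Commute (x i j) (x k l) :=
  stmt18_general x hrow hcol hrowsum hcolsum
end
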